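/- arXiv:2303.13865 — 6 statements merged into one kernel-verified Lean document; each statement's English description precedes it below -/
import Mathlib

section
/- Let S0, S1, S2 be measurable spaces. Let κ01, κ̃01 be Markov kernels from S0 to S1 and κ12, κ̃12 Markov kernels from S1 to S2, and let g : S2 → ℝ≥0∞ be measurable with 0 < (κ̃12 g)(z) < ∞ for all z ∈ S1 and 0 < ((κ̃01 ∘ κ̃12) g)(x) < ∞ for all x ∈ S0. Define the messages m12(z,y) = g(y) / (κ̃12 g)(z), m01(x,z) = (κ̃12 g)(z) / ((κ̃01 ∘ κ̃12) g)(x) and m02(x,y) = g(y) / ((κ̃01 ∘ κ̃12) g)(x). Then for every σ-finite measure μ0 on S0, F_{κ12}(m12, F_{κ01}(m01, μ0)) = F_{κ01 ∘ κ12}(m02, μ0), i.e. sequentially composing the forward maps of the two kernels (with their respective messages) yields the same measure as the forward map of the composed kernel κ01 ∘ κ12 with message m02. -/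
open MeasureTheory ProbabilityTheory ENNReal

/-- Pullback of `h` under the kernel `κ`: `(κ h)(x) = ∫ h(y) κ(x, dy)`. -/
noncomputable def pull {S S' : Type*} [MeasurableSpace S] [MeasurableSpace S']
    (κ : Kernel S S') (h : S' → ℝ≥0∞) (x : S) : ℝ≥0∞ :=
  ∫⁻ y, h y ∂(κ x)

/-- Forward map: `F_κ(m, μ)(B) = ∫∫ 1_B(y) m(x,y) κ(x,dy) μ(dx)`. -/
noncomputable def fwd {S S' : Type*} [MeasurableSpace S] [MeasurableSpace S']
    (κ : Kernel S S') (m : S × S' → ℝ≥0∞) (μ : Measure S) : Measure S' :=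
  μ.bind (fun x => (κ x).withDensity (fun y => m (x, y)))

/-- Weight: `w_κ(m, μ) = ∫∫ m(x,y) κ(x,dy) μ(dx)`. -/
noncomputable def wgt {S S' : Type*} [MeasurableSpace S] [MeasurableSpace S']
    (κ : Kernel S S') (m : S × S' → ℝ≥0∞) (μ : Measure S) : ℝ≥0∞ :=
  ∫⁻ x, ∫⁻ y, m (x, y) ∂(κ x) ∂μ

/-- h-transform of `κ` with respect to `h`, evaluated at `x`:
`κ^h(x, B) = (∫ 1_B(y) h(y) κ(x,dy)) / (κ h)(x)`. -/
noncomputable def hTransform {S S' : Type*} [MeasurableSpace S] [MeasurableSpace S']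
    (κ : Kernel S S') (h : S' → ℝ≥0∞) (x : S) : Measure S' :=
  (pull κ h x)⁻¹ • (κ x).withDensity h

/-- Product (parallel tensor) of two kernels: determined by
`(κ1 ⊗ₚ κ2)((x1,x2), B1 ×ˢ B2) = κ1 x1 B1 * κ2 x2 B2`. -/
noncomputable def pker {S1 S2 T1 T2 : Type*} [MeasurableSpace S1] [MeasurableSpace S2]
    [MeasurableSpace T1] [MeasurableSpace T2]
    (κ1 : Kernel S1 T1) (κ2 : Kernel S2 T2) [IsSFiniteKernel κ1] [IsSFiniteKernel κ2] :
    Kernel (S1 × S2) (T1 × T2) :=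
  (Kernel.prodMkRight S2 κ1) ×ₖ (Kernel.prodMkLeft S1 κ2)

section
variable {S0 S1 S2 : Type*}
    [MeasurableSpace S0] [MeasurableSpace S1] [MeasurableSpace S2]

theorem my_aux (κ01 : Kernel S0 S1) (κ12 : Kernel S1 S2)
    [IsMarkovKernel κ01] [IsMarkovKernel κ12]
    (g : S2 → ℝ≥0∞) (hg : Measurable g)
    (D : S1 → ℝ≥0∞) (hDm : Measurable D) (C : S0 → ℝ≥0∞) (_hCm : Measurable C)
    (hD : ∀ z, D z ≠ 0 ∧ D z ≠ ∞) (x : S0) :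
    ((κ01 x).withDensity (fun z => D z / C x)).bind
        (fun z => (κ12 z).withDensity (fun y => g y / D z)) =
      (((κ12 ∘ₖ κ01) x)).withDensity (fun y => g y / C x) := by
  have h12u : Measurable (Function.uncurry fun z y => g y / D z) :=
    (hg.comp measurable_snd).div (hDm.comp measurable_fst)
  have hK12 : (fun z => (κ12 z).withDensity (fun y => g y / D z)) =
      fun z => Kernel.withDensity κ12 (fun z y => g y / D z) z := by
    funext z; rw [Kernel.withDensity_apply _ h12u]
  ext t ht
  rw [hK12, Measure.bind_apply ht (Kernel.measurable _).aemeasurable]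
  rw [lintegral_withDensity_eq_lintegral_mul _ (show Measurable (fun z => D z / C x) from hDm.div measurable_const)
    ((Kernel.withDensity κ12 _).measurable_coe ht)]
  have hrhs : (((κ12 ∘ₖ κ01) x)).withDensity (fun y => g y / C x) t
      = (C x)⁻¹ * ∫⁻ z, ∫⁻ y, t.indicator g y ∂κ12 z ∂κ01 x := by
    rw [withDensity_apply _ ht, ← lintegral_indicator ht _]
    have : ∀ y, t.indicator (fun y => g y / C x) y = (C x)⁻¹ * t.indicator g y := by
      intro y
      simp only [Set.indicator]
      split <;> simp [ENNReal.div_eq_inv_mul]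
    simp_rw [this]
    rw [lintegral_const_mul _ (hg.indicator ht),
      Kernel.lintegral_comp _ _ _ (hg.indicator ht)]
  rw [hrhs, ← lintegral_const_mul _ ((hg.indicator ht).lintegral_kernel)]
  refine lintegral_congr fun z => ?_
  simp only [Pi.mul_apply]
  rw [Kernel.withDensity_apply' _ h12u _ t, ← lintegral_indicator ht _]
  have : ∀ y, t.indicator (fun y => g y / D z) y = (D z)⁻¹ * t.indicator g y := by
    intro y
    simp only [Set.indicator]
    split <;> simp [ENNReal.div_eq_inv_mul]
  simp_rw [this]
  rw [lintegral_const_mul _ (hg.indicator ht)]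
  rw [ENNReal.div_eq_inv_mul, mul_assoc, ← mul_assoc (D z),
    ENNReal.mul_inv_cancel (hD z).1 (hD z).2, one_mul]
end

/-- sequential composition of forward maps equals the forward map of the
composed kernel (with the composed message). -/
theorem stmt_1 {S0 S1 S2 : Type*}
    [MeasurableSpace S0] [MeasurableSpace S1] [MeasurableSpace S2]
    (κ01 κt01 : Kernel S0 S1) (κ12 κt12 : Kernel S1 S2)
    [IsMarkovKernel κ01] [IsMarkovKernel κt01] [IsMarkovKernel κ12] [IsMarkovKernel κt12]
    (g : S2 → ℝ≥0∞) (hg : Measurable g)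
    (hz : ∀ z : S1, 0 < pull κt12 g z ∧ pull κt12 g z < ∞)
    (hx : ∀ x : S0, 0 < pull (κt12 ∘ₖ κt01) g x ∧ pull (κt12 ∘ₖ κt01) g x < ∞)
    (m12 : S1 × S2 → ℝ≥0∞) (hm12 : m12 = fun p => g p.2 / pull κt12 g p.1)
    (m01 : S0 × S1 → ℝ≥0∞)
    (hm01 : m01 = fun p => pull κt12 g p.2 / pull (κt12 ∘ₖ κt01) g p.1)
    (m02 : S0 × S2 → ℝ≥0∞)
    (hm02 : m02 = fun p => g p.2 / pull (κt12 ∘ₖ κt01) g p.1)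
    (μ0 : Measure S0) [SigmaFinite μ0] :
    fwd κ12 m12 (fwd κ01 m01 μ0) = fwd (κ12 ∘ₖ κ01) m02 μ0 := by
  subst hm12 hm01 hm02
  have hDm : Measurable (pull κt12 g) := hg.lintegral_kernel
  have hCm : Measurable (pull (κt12 ∘ₖ κt01) g) := hg.lintegral_kernel
  have hD : ∀ z, pull κt12 g z ≠ 0 ∧ pull κt12 g z ≠ ∞ :=
    fun z => ⟨(hz z).1.ne', (hz z).2.ne⟩
  have h01u : Measurable (Function.uncurry fun x z =>
      pull κt12 g z / pull (κt12 ∘ₖ κt01) g x) :=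
    (hDm.comp measurable_snd).div (hCm.comp measurable_fst)
  have h12u : Measurable (Function.uncurry fun z y => g y / pull κt12 g z) :=
    (hg.comp measurable_snd).div (hDm.comp measurable_fst)
  show (μ0.bind fun x => (κ01 x).withDensity fun z =>
        pull κt12 g z / pull (κt12 ∘ₖ κt01) g x).bind
      (fun z => (κ12 z).withDensity fun y => g y / pull κt12 g z)
    = μ0.bind fun x => ((κ12 ∘ₖ κ01) x).withDensity fun y => g y / pull (κt12 ∘ₖ κt01) g x
  have e01 : (fun x => (κ01 x).withDensity fun z =>
      pull κt12 g z / pull (κt12 ∘ₖ κt01) g x)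
      = fun x => Kernel.withDensity κ01
        (fun x z => pull κt12 g z / pull (κt12 ∘ₖ κt01) g x) x :=
    funext fun x => (Kernel.withDensity_apply _ h01u x).symm
  have e12 : (fun z => (κ12 z).withDensity fun y => g y / pull κt12 g z)
      = fun z => Kernel.withDensity κ12 (fun z y => g y / pull κt12 g z) z :=
    funext fun z => (Kernel.withDensity_apply _ h12u z).symm
  rw [e01, e12, Measure.bind_bind (Kernel.measurable _).aemeasurable (Kernel.measurable _).aemeasurable]
  congr 1
  funext x
  rw [Kernel.withDensity_apply _ h01u,
    show ⇑(Kernel.withDensity κ12 fun z y => g y / pull κt12 g z)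
      = fun z => (κ12 z).withDensity fun y => g y / pull κt12 g z from
      funext fun z => Kernel.withDensity_apply _ h12u z]
  exact my_aux κ01 κ12 g hg _ hDm _ hCm hD x
end

section
/- Let S1, S1', S2, S2' be measurable spaces, let κ1, κ̃1 be Markov kernels from S1 to S1' and κ2, κ̃2 Markov kernels from S2 to S2', and let g1 : S1' → ℝ≥0∞, g2 : S2' → ℝ≥0∞ be measurable with 0 < (κ̃1 g1)(x1) < ∞ and 0 < (κ̃2 g2)(x2) < ∞ for all x1 ∈ S1, x2 ∈ S2. Define the messages mi(x,y) = gi(y)/(κ̃i gi)(x) for i = 1,2, and m1⊗2((x1,x2),(y1,y2)) = m1(x1,y1) · m2(x2,y2). Then for all σ-finite measures μ1 on S1 and μ2 on S2, F_{κ1 ⊗ κ2}(m1⊗2, μ1 ⊗ μ2) = F_{κ1}(m1, μ1) ⊗ F_{κ2}(m2, μ2), i.e. the forward map of the product kernel applied to a product measure equals the product of the individual forward maps. -/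
open MeasureTheory ProbabilityTheory ENNReal

section Helpers

variable {S S' : Type*} [MeasurableSpace S] [MeasurableSpace S']

lemma fwd_kernel_meas (κ : Kernel S S') [IsSFiniteKernel κ] {m : S × S' → ℝ≥0∞}
    (hm : Measurable m) :
    Measurable fun x => (κ x).withDensity (fun y => m (x, y)) := by
  have h : Measurable (Function.uncurry fun x y => m (x, y)) := by
    exact hm
  have heq : (fun x => (κ x).withDensity (fun y => m (x, y)))
      = ⇑(Kernel.withDensity κ (fun x y => m (x, y))) := by
    funext x; exact (Kernel.withDensity_apply κ h x).symm
  rw [heq]; exact Kernel.measurable _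

lemma fwd_apply (κ : Kernel S S') [IsSFiniteKernel κ] {m : S × S' → ℝ≥0∞}
    (hm : Measurable m) (μ : Measure S) {s : Set S'} (hs : MeasurableSet s) :
    fwd κ m μ s = ∫⁻ x, ∫⁻ y in s, m (x, y) ∂(κ x) ∂μ := by
  rw [fwd, Measure.bind_apply hs (fwd_kernel_meas κ hm).aemeasurable]
  simp_rw [withDensity_apply _ hs]

lemma fwd_eq_map (κ : Kernel S S') [IsSFiniteKernel κ] {m : S × S' → ℝ≥0∞}
    (hm : Measurable m) (μ : Measure S) [SFinite μ] :
    fwd κ m μ = ((μ ⊗ₘ κ).withDensity m).map Prod.snd := by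
  ext s hs
  rw [fwd_apply κ hm μ hs, Measure.map_apply measurable_snd hs,
    withDensity_apply _ (measurable_snd hs),
    ← lintegral_indicator (measurable_snd hs),
    Measure.lintegral_compProd (hm.indicator (measurable_snd hs))]
  refine lintegral_congr fun x => ?_
  rw [← lintegral_indicator hs]
  refine lintegral_congr fun y => ?_
  by_cases h : y ∈ s <;> simp [h]

lemma fwd_sfinite (κ : Kernel S S') [IsSFiniteKernel κ] {m : S × S' → ℝ≥0∞}
    (hm : Measurable m) (μ : Measure S) [SFinite μ] :
    SFinite (fwd κ m μ) := by
  rw [fwd_eq_map κ hm μ]; infer_instance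

end Helpers

/-- the forward map of the product kernel applied to a product measure
equals the product of the individual forward maps. -/
theorem stmt_3 {S1 S1' S2 S2' : Type*}
    [MeasurableSpace S1] [MeasurableSpace S1'] [MeasurableSpace S2] [MeasurableSpace S2']
    (κ1 κt1 : Kernel S1 S1') (κ2 κt2 : Kernel S2 S2')
    [IsMarkovKernel κ1] [IsMarkovKernel κt1] [IsMarkovKernel κ2] [IsMarkovKernel κt2]
    (g1 : S1' → ℝ≥0∞) (hg1 : Measurable g1) (g2 : S2' → ℝ≥0∞) (hg2 : Measurable g2)
    (h1 : ∀ x1 : S1, 0 < pull κt1 g1 x1 ∧ pull κt1 g1 x1 < ∞)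
    (h2 : ∀ x2 : S2, 0 < pull κt2 g2 x2 ∧ pull κt2 g2 x2 < ∞)
    (m1 : S1 × S1' → ℝ≥0∞) (hm1 : m1 = fun p => g1 p.2 / pull κt1 g1 p.1)
    (m2 : S2 × S2' → ℝ≥0∞) (hm2 : m2 = fun p => g2 p.2 / pull κt2 g2 p.1)
    (m12 : (S1 × S2) × (S1' × S2') → ℝ≥0∞)
    (hm12 : m12 = fun p => m1 (p.1.1, p.2.1) * m2 (p.1.2, p.2.2))
    (μ1 : Measure S1) [SigmaFinite μ1] (μ2 : Measure S2) [SigmaFinite μ2] :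
    fwd (pker κ1 κ2) m12 (μ1.prod μ2) = (fwd κ1 m1 μ1).prod (fwd κ2 m2 μ2) := by
  subst hm12
  haveI hpkM : IsMarkovKernel (pker κ1 κ2) := by unfold pker; infer_instance
  have hc1 : Measurable (pull κt1 g1) := by
    have : Measurable fun x => ∫⁻ y, (fun p : S1 × S1' => g1 p.2) (x, y) ∂κt1 x :=
      Measurable.lintegral_kernel_prod_right' (κ := κt1) (hg1.comp measurable_snd)
    exact this
  have hc2 : Measurable (pull κt2 g2) := by
    have : Measurable fun x => ∫⁻ y, (fun p : S2 × S2' => g2 p.2) (x, y) ∂κt2 x :=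
      Measurable.lintegral_kernel_prod_right' (κ := κt2) (hg2.comp measurable_snd)
    exact this
  have hm1' : Measurable m1 := by
    rw [hm1]; exact (hg1.comp measurable_snd).div (hc1.comp measurable_fst)
  have hm2' : Measurable m2 := by
    rw [hm2]; exact (hg2.comp measurable_snd).div (hc2.comp measurable_fst)
  have hm12' : Measurable fun p : (S1 × S2) × S1' × S2' => m1 (p.1.1, p.2.1) * m2 (p.1.2, p.2.2) :=
    (hm1'.comp (measurable_fst.fst.prodMk measurable_snd.fst)).mul
      (hm2'.comp (measurable_fst.snd.prodMk measurable_snd.snd))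
  haveI hsf2 : SFinite (fwd κ2 m2 μ2) := fwd_sfinite κ2 hm2' μ2
  ext s hs
  set ι : S1' × S2' → ℝ≥0∞ := s.indicator 1 with hι_def
  have hι : Measurable ι := measurable_one.indicator hs
  have hJint : Measurable fun r : ((S1 × S2) × S1') × S2' =>
      ι (r.1.2, r.2) * (m1 (r.1.1.1, r.1.2) * m2 (r.1.1.2, r.2)) :=
    (hι.comp (measurable_fst.snd.prodMk measurable_snd)).mul
      ((hm1'.comp (measurable_fst.fst.fst.prodMk measurable_fst.snd)).mul
        (hm2'.comp (measurable_fst.fst.snd.prodMk measurable_snd)))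
  set J : (S1 × S2) × S1' → ℝ≥0∞ :=
    fun r => ∫⁻ y2, ι (r.2, y2) * (m1 (r.1.1, r.2) * m2 (r.1.2, y2)) ∂κ2 r.1.2 with hJ_def
  have hJ : Measurable J := by
    have : Measurable fun r : (S1 × S2) × S1' => ∫⁻ y2,
        (fun q : ((S1 × S2) × S1') × S2' =>
          ι (q.1.2, q.2) * (m1 (q.1.1.1, q.1.2) * m2 (q.1.1.2, q.2))) (r, y2)
        ∂(Kernel.prodMkRight S1' (Kernel.prodMkLeft S1 κ2)) r :=
      Measurable.lintegral_kernel_prod_right' hJint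
    simpa [hJ_def, Kernel.prodMkRight_apply, Kernel.prodMkLeft_apply] using this
  have hpk : ∀ p : S1 × S2, pker κ1 κ2 p = (κ1 p.1).prod (κ2 p.2) := by
    intro p
    rw [pker, Kernel.prod_apply]
    rfl
  -- LHS
  have lhs_eq : fwd (pker κ1 κ2)
        (fun p => m1 (p.1.1, p.2.1) * m2 (p.1.2, p.2.2)) (μ1.prod μ2) s
      = ∫⁻ x1, ∫⁻ y1, ∫⁻ x2, ∫⁻ y2,
          ι (y1, y2) * (m1 (x1, y1) * m2 (x2, y2)) ∂κ2 x2 ∂μ2 ∂κ1 x1 ∂μ1 := by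
    rw [fwd_apply _ hm12' _ hs]
    have step1 : ∀ p : S1 × S2,
        (∫⁻ q in s, m1 (p.1, q.1) * m2 (p.2, q.2) ∂(pker κ1 κ2 p))
          = ∫⁻ y1, J (p, y1) ∂κ1 p.1 := by
      intro p
      rw [hpk p, ← lintegral_indicator hs]
      have hid : ∀ q : S1' × S2',
          s.indicator (fun q : S1' × S2' => m1 (p.1, q.1) * m2 (p.2, q.2)) q
          = ι q * (m1 (p.1, q.1) * m2 (p.2, q.2)) := by
        intro q
        by_cases h : q ∈ s <;> simp [hι_def, Set.indicator_apply, h]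
      simp_rw [hid]
      have hmq : Measurable fun q : S1' × S2' => ι q * (m1 (p.1, q.1) * m2 (p.2, q.2)) :=
        hι.mul ((hm1'.comp (measurable_const.prodMk measurable_fst)).mul
          (hm2'.comp (measurable_const.prodMk measurable_snd)))
      rw [lintegral_prod (fun q : S1' × S2' => ι q * (m1 (p.1, q.1) * m2 (p.2, q.2)))
        hmq.aemeasurable]
    simp_rw [step1]
    have hΨ : Measurable fun p : S1 × S2 => ∫⁻ y1, J (p, y1) ∂κ1 p.1 := by
      have : Measurable fun p : S1 × S2 =>
          ∫⁻ y1, J (p, y1) ∂(Kernel.prodMkRight S2 κ1) p :=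
        Measurable.lintegral_kernel_prod_right' hJ
      simpa [Kernel.prodMkRight_apply] using this
    rw [lintegral_prod _ hΨ.aemeasurable]
    refine lintegral_congr fun x1 => ?_
    have hswap : (∫⁻ x2, ∫⁻ y1, J ((x1, x2), y1) ∂κ1 x1 ∂μ2)
        = ∫⁻ y1, ∫⁻ x2, J ((x1, x2), y1) ∂μ2 ∂κ1 x1 :=
      lintegral_lintegral_swap
        (hJ.comp ((measurable_const.prodMk measurable_fst).prodMk
          measurable_snd)).aemeasurable
    exact hswap.trans rfl
  -- RHS
  set K : S2 × S1' → ℝ≥0∞ := fun q => ∫⁻ y2, ι (q.2, y2) * m2 (q.1, y2) ∂κ2 q.1 with hK_def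
  have hK : Measurable K := by
    have : Measurable fun q : S2 × S1' => ∫⁻ y2,
        (fun r : (S2 × S1') × S2' => ι (r.1.2, r.2) * m2 (r.1.1, r.2)) (q, y2)
        ∂(Kernel.prodMkRight S1' κ2) q :=
      Measurable.lintegral_kernel_prod_right'
        ((hι.comp (measurable_fst.snd.prodMk measurable_snd)).mul
          (hm2'.comp (measurable_fst.fst.prodMk measurable_snd)))
    simpa [hK_def, Kernel.prodMkRight_apply] using this
  have hsec : ∀ y1 : S1', fwd κ2 m2 μ2 (Prod.mk y1 ⁻¹' s) = ∫⁻ x2, K (x2, y1) ∂μ2 := by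
    intro y1
    rw [fwd_apply κ2 hm2' μ2 (measurable_prodMk_left hs)]
    refine lintegral_congr fun x2 => ?_
    rw [← lintegral_indicator (measurable_prodMk_left hs)]
    refine lintegral_congr fun y2 => ?_
    by_cases h : (y1, y2) ∈ s <;> simp [hι_def, Set.indicator_apply, h]
  have rhs_eq : (fwd κ1 m1 μ1).prod (fwd κ2 m2 μ2) s
      = ∫⁻ x1, ∫⁻ y1, ∫⁻ x2, ∫⁻ y2,
          m1 (x1, y1) * (ι (y1, y2) * m2 (x2, y2)) ∂κ2 x2 ∂μ2 ∂κ1 x1 ∂μ1 := by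
    rw [Measure.prod_apply hs, fwd,
      Measure.lintegral_bind (fwd_kernel_meas κ1 hm1').aemeasurable
        (measurable_measure_prodMk_left hs).aemeasurable]
    refine lintegral_congr fun x1 => ?_
    have hm1x : Measurable fun y => m1 (x1, y) :=
      hm1'.comp (measurable_const.prodMk measurable_id)
    rw [lintegral_withDensity_eq_lintegral_mul (κ1 x1) (f := fun y => m1 (x1, y)) hm1x
      (g := fun y1 => fwd κ2 m2 μ2 (Prod.mk y1 ⁻¹' s)) (measurable_measure_prodMk_left hs)]
    refine lintegral_congr fun y1 => ?_
    simp only [Pi.mul_apply]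
    have hKy : Measurable fun x2 => K (x2, y1) :=
      hK.comp (measurable_id.prodMk measurable_const)
    rw [hsec y1, ← lintegral_const_mul (m1 (x1, y1)) (f := fun x2 => K (x2, y1)) hKy]
    refine lintegral_congr fun x2 => ?_
    have hin : Measurable fun y2 => ι (y1, y2) * m2 (x2, y2) :=
      (hι.comp (measurable_const.prodMk measurable_id)).mul
        (hm2'.comp (measurable_const.prodMk measurable_id))
    rw [← lintegral_const_mul (m1 (x1, y1)) (f := fun y2 => ι (y1, y2) * m2 (x2, y2)) hin]
  rw [lhs_eq, rhs_eq]
  exact lintegral_congr fun x1 => lintegral_congr fun y1 => lintegral_congr fun x2 =>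
    lintegral_congr fun y2 => mul_left_comm _ _ _
end

section
/- Let S0, S1, S2 be measurable spaces, κ01 a Markov kernel from S0 to S1, κ12 a Markov kernel from S1 to S2, and g : S2 → ℝ≥0∞ measurable with 0 < (κ12 g)(z) < ∞ for all z ∈ S1 and 0 < ((κ01 ∘ κ12) g)(x) < ∞ for all x ∈ S0. Then the h-transforms compose: the composition of the h-transform κ01^{κ12 g} (the h-transform of κ01 with respect to the function κ12 g) with the h-transform κ12^{g} equals the h-transform (κ01 ∘ κ12)^{g} of the composed kernel with respect to g; that is, for every x ∈ S0 and measurable B ⊆ S2, ∫ κ12^{g}(z, B) κ01^{κ12 g}(x, dz) = (κ01 ∘ κ12)^{g}(x, B). -/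
open MeasureTheory ProbabilityTheory ENNReal

/-- h-transforms compose: composing the h-transform of `κ01` w.r.t. `κ12 g`
with the h-transform of `κ12` w.r.t. `g` gives the h-transform of `κ01 ∘ κ12` w.r.t. `g`. -/
theorem stmt_6 {S0 S1 S2 : Type*}
    [MeasurableSpace S0] [MeasurableSpace S1] [MeasurableSpace S2]
    (κ01 : Kernel S0 S1) (κ12 : Kernel S1 S2)
    [IsMarkovKernel κ01] [IsMarkovKernel κ12]
    (g : S2 → ℝ≥0∞) (hg : Measurable g)
    (hz : ∀ z : S1, 0 < pull κ12 g z ∧ pull κ12 g z < ∞)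
    (hx : ∀ x : S0, 0 < pull (κ12 ∘ₖ κ01) g x ∧ pull (κ12 ∘ₖ κ01) g x < ∞) :
    ∀ (x : S0) (B : Set S2), MeasurableSet B →
      ∫⁻ z, hTransform κ12 g z B ∂(hTransform κ01 (fun z => pull κ12 g z) x) =
        hTransform (κ12 ∘ₖ κ01) g x B := by
  intro x B hB
  set h : S1 → ℝ≥0∞ := fun z => pull κ12 g z with hh
  have hind : Measurable (B.indicator g) := hg.indicator hB
  have hmeas_h : Measurable h := by
    apply Measurable.lintegral_kernel_prod_right (κ := κ12) (f := fun _ y => g y)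
    exact hg.comp measurable_snd
  have hmeas_int : Measurable (fun z => ∫⁻ y, B.indicator g y ∂(κ12 z)) := by
    apply Measurable.lintegral_kernel_prod_right (κ := κ12) (f := fun _ y => B.indicator g y)
    exact hind.comp measurable_snd
  -- rewrite inner hTransform applied to B
  have inner : ∀ z, hTransform κ12 g z B = (h z)⁻¹ * ∫⁻ y, B.indicator g y ∂(κ12 z) := by
    intro z
    rw [hTransform, Measure.smul_apply, smul_eq_mul, withDensity_apply _ hB,
      ← lintegral_indicator hB]
  have hpull_eq : pull κ01 h x = pull (κ12 ∘ₖ κ01) g x := by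
    rw [pull, pull, Kernel.comp_apply, Measure.lintegral_bind (κ12.measurable.aemeasurable) hg.aemeasurable]; rfl
  calc ∫⁻ z, hTransform κ12 g z B ∂(hTransform κ01 h x)
      = (pull κ01 h x)⁻¹ * ∫⁻ z, h z * ((h z)⁻¹ * ∫⁻ y, B.indicator g y ∂(κ12 z)) ∂(κ01 x) := by
        have e1 : hTransform κ01 h x = (pull κ01 h x)⁻¹ • (κ01 x).withDensity h := rfl
        rw [e1, lintegral_smul_measure]
        simp only [inner]
        have hwd := lintegral_withDensity_eq_lintegral_mul (κ01 x) hmeas_h (hmeas_h.inv.mul hmeas_int)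
        simp only [Pi.mul_apply, Pi.inv_apply] at hwd
        rw [hwd]
        rfl
    _ = (pull (κ12 ∘ₖ κ01) g x)⁻¹ * ∫⁻ z, ∫⁻ y, B.indicator g y ∂(κ12 z) ∂(κ01 x) := by
        rw [hpull_eq]
        congr 1
        apply lintegral_congr
        intro z
        rw [← mul_assoc, ENNReal.mul_inv_cancel (hz z).1.ne' (hz z).2.ne, one_mul]
    _ = hTransform (κ12 ∘ₖ κ01) g x B := by
        rw [hTransform, Measure.smul_apply, smul_eq_mul, withDensity_apply _ hB,
          ← lintegral_indicator hB, Kernel.comp_apply,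
          Measure.lintegral_bind (κ12.measurable.aemeasurable) hind.aemeasurable]
end

section
/- Let S1, S1', S2, S2' be measurable spaces, κ1, κ̃1 Markov kernels from S1 to S1', κ2, κ̃2 Markov kernels from S2 to S2', and g1 : S1' → ℝ≥0∞, g2 : S2' → ℝ≥0∞ measurable with 0 < (κ̃1 g1)(x1) < ∞ and 0 < (κ̃2 g2)(x2) < ∞ for all x1 ∈ S1, x2 ∈ S2. Define mi(x,y) = gi(y)/(κ̃i gi)(x) and m1⊗2((x1,x2),(y1,y2)) = m1(x1,y1) m2(x2,y2). Then for all σ-finite measures μ1 on S1 and μ2 on S2, the weights factorize: w_{κ1 ⊗ κ2}(m1⊗2, μ1 ⊗ μ2) = w_{κ1}(m1, μ1) · w_{κ2}(m2, μ2). -/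
open MeasureTheory ProbabilityTheory ENNReal

/-- weights factorize over parallel (tensor) composition. -/
theorem stmt_11 {S1 S1' S2 S2' : Type*}
    [MeasurableSpace S1] [MeasurableSpace S1'] [MeasurableSpace S2] [MeasurableSpace S2']
    (κ1 κt1 : Kernel S1 S1') (κ2 κt2 : Kernel S2 S2')
    [IsMarkovKernel κ1] [IsMarkovKernel κt1] [IsMarkovKernel κ2] [IsMarkovKernel κt2]
    (g1 : S1' → ℝ≥0∞) (hg1 : Measurable g1) (g2 : S2' → ℝ≥0∞) (hg2 : Measurable g2)
    (h1 : ∀ x1 : S1, 0 < pull κt1 g1 x1 ∧ pull κt1 g1 x1 < ∞)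
    (h2 : ∀ x2 : S2, 0 < pull κt2 g2 x2 ∧ pull κt2 g2 x2 < ∞)
    (m1 : S1 × S1' → ℝ≥0∞) (hm1 : m1 = fun p => g1 p.2 / pull κt1 g1 p.1)
    (m2 : S2 × S2' → ℝ≥0∞) (hm2 : m2 = fun p => g2 p.2 / pull κt2 g2 p.1)
    (m12 : (S1 × S2) × (S1' × S2') → ℝ≥0∞)
    (hm12 : m12 = fun p => m1 (p.1.1, p.2.1) * m2 (p.1.2, p.2.2))
    (μ1 : Measure S1) [SigmaFinite μ1] (μ2 : Measure S2) [SigmaFinite μ2] :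
    wgt (pker κ1 κ2) m12 (μ1.prod μ2) = wgt κ1 m1 μ1 * wgt κ2 m2 μ2 := by
  have hp1 : Measurable (pull κt1 g1) :=
    Measurable.lintegral_kernel_prod_right (f := fun _ y => g1 y) (hg1.comp measurable_snd)
  have hp2 : Measurable (pull κt2 g2) :=
    Measurable.lintegral_kernel_prod_right (f := fun _ y => g2 y) (hg2.comp measurable_snd)
  have hm1m : Measurable m1 := by
    rw [hm1]; exact (hg1.comp measurable_snd).div (hp1.comp measurable_fst)
  have hm2m : Measurable m2 := by
    rw [hm2]; exact (hg2.comp measurable_snd).div (hp2.comp measurable_fst)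
  have hf1 : Measurable fun x => ∫⁻ y, m1 (x, y) ∂(κ1 x) :=
    Measurable.lintegral_kernel_prod_right hm1m
  have hf2 : Measurable fun x => ∫⁻ y, m2 (x, y) ∂(κ2 x) :=
    Measurable.lintegral_kernel_prod_right hm2m
  have hstep : ∀ p : S1 × S2,
      ∫⁻ q, m12 (p, q) ∂((pker κ1 κ2) p)
        = (∫⁻ y, m1 (p.1, y) ∂(κ1 p.1)) * ∫⁻ y, m2 (p.2, y) ∂(κ2 p.2) := by
    intro p
    rw [pker, Kernel.prod_apply, Kernel.prodMkRight_apply, Kernel.prodMkLeft_apply, hm12]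
    exact lintegral_prod_mul (f := fun y => m1 (p.1, y)) (g := fun y => m2 (p.2, y))
      (hm1m.comp measurable_prodMk_left).aemeasurable
      (hm2m.comp measurable_prodMk_left).aemeasurable
  unfold wgt
  simp only [hstep]
  exact lintegral_prod_mul (μ := μ1) (ν := μ2) hf1.aemeasurable hf2.aemeasurable
end

section
/- Let E be a measurable space and E' a standard Borel space, and let κ be a Markov kernel from E to E'. Then there exists a measurable function f : E × [0,1] → E' such that for every x ∈ E, the pushforward of the Lebesgue (uniform) probability measure on [0,1] under z ↦ f(x, z) equals κ(x, ·); that is, if Z is uniformly distributed on [0,1], then f(x, Z) has law κ(x, ·) for each x. -/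
open MeasureTheory ProbabilityTheory ENNReal

section Stmt13Aux
open Set Filter Topology ProbabilityTheory
namespace Stmt13Aux

/-- Generalized inverse (quantile) bound for a Stieltjes function. -/
lemma quantile_le_iff (Φ : StieltjesFunction ℝ) (hbot : Tendsto Φ atBot (𝓝 0))
    (htop : Tendsto Φ atTop (𝓝 1)) {u : ℝ} (hu0 : 0 < u) (hu1 : u < 1) (t : ℝ) :
    sInf {s | u ≤ Φ s} ≤ t ↔ u ≤ Φ t := by
  have hne : {s | u ≤ Φ s}.Nonempty := by
    obtain ⟨s, hs⟩ := (htop.eventually (eventually_gt_nhds hu1)).exists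
    exact ⟨s, hs.le⟩
  have hbdd : BddBelow {s | u ≤ Φ s} := by
    obtain ⟨s0, hs0⟩ := (hbot.eventually (eventually_lt_nhds hu0)).exists
    refine ⟨s0, fun s hs => le_of_not_gt fun hlt => ?_⟩
    exact absurd (hs.trans (Φ.mono hlt.le)) (not_le.mpr hs0)
  constructor
  · intro h
    have hmem : ∀ s ∈ Ioi t, u ≤ Φ s := by
      intro s hs
      obtain ⟨s', hs', hlt⟩ := (csInf_lt_iff hbdd hne).1 (lt_of_le_of_lt h hs)
      exact hs'.trans (Φ.mono hlt.le)
    have hT : Tendsto Φ (𝓝[>] t) (𝓝 (Φ t)) :=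
      ((Φ.right_continuous t)).mono_left (nhdsWithin_mono t Ioi_subset_Ici_self)
    exact ge_of_tendsto hT (eventually_nhdsWithin_of_forall hmem)
  · intro h
    exact csInf_le hbdd h

lemma volume_coe_le {c : ℝ} (hc0 : 0 ≤ c) (hc1 : c ≤ 1) :
    (volume : Measure unitInterval) {z : unitInterval | (z : ℝ) ≤ c} = ENNReal.ofReal c := by
  have hemb : MeasurableEmbedding (Subtype.val : unitInterval → ℝ) :=
    MeasurableEmbedding.subtype_coe measurableSet_Icc
  rw [unitInterval.volume_def,
    Measure.comap_apply _ Subtype.val_injective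
      (fun s hs => hemb.measurableSet_image.2 hs) _
      (measurableSet_le measurable_subtype_coe measurable_const)]
  have himg : (Subtype.val '' {z : unitInterval | (z : ℝ) ≤ c}) = Icc 0 c := by
    ext y
    constructor
    · rintro ⟨z, hz, rfl⟩
      exact ⟨z.2.1, hz⟩
    · rintro ⟨hy0, hyc⟩
      exact ⟨⟨y, hy0, hyc.trans hc1⟩, hyc, rfl⟩
  rw [himg, Real.volume_Icc, sub_zero]

/-- The truncation sending the endpoints of the unit interval inside. -/
noncomputable def vv (z : unitInterval) : ℝ :=
  if (z : ℝ) ∈ Ioo (0:ℝ) 1 then (z : ℝ) else 1/2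

lemma vv_mem (z : unitInterval) : vv z ∈ Ioo (0:ℝ) 1 := by
  unfold vv; split_ifs with h
  · exact h
  · norm_num

lemma measurable_vv : Measurable vv :=
  Measurable.ite (measurable_subtype_coe measurableSet_Ioo)
    measurable_subtype_coe measurable_const

lemma vv_ae_eq : (fun z : unitInterval => vv z) =ᵐ[volume] (fun z => (z : ℝ)) := by
  have h0 : (volume : Measure unitInterval) {z : unitInterval | (z:ℝ) = 0 ∨ (z:ℝ) = 1} = 0 := by
    have hemb : MeasurableEmbedding (Subtype.val : unitInterval → ℝ) :=
      MeasurableEmbedding.subtype_coe measurableSet_Icc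
    rw [unitInterval.volume_def,
      Measure.comap_apply _ Subtype.val_injective
        (fun s hs => hemb.measurableSet_image.2 hs) _
        (by
          have : {z : unitInterval | (z:ℝ) = 0 ∨ (z:ℝ) = 1}
              = Subtype.val ⁻¹' ({0, 1} : Set ℝ) := by
            ext z; simp [Set.mem_insert_iff]
          rw [this]
          exact measurable_subtype_coe (by measurability))]
    refine measure_mono_null (t := ({0,1} : Set ℝ)) ?_ ?_
    · rintro y ⟨z, hz, rfl⟩
      simpa [Set.mem_insert_iff] using hz
    · exact measure_union_null (Real.volume_singleton) (Real.volume_singleton)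
  refine measure_mono_null ?_ h0
  intro z hz
  simp only [Set.mem_setOf_eq]
  by_contra hcon
  push_neg at hcon
  apply hz
  show vv z = (z : ℝ)
  unfold vv
  rw [if_pos]
  exact ⟨(z.2.1).lt_of_ne (fun h => hcon.1 h.symm), (z.2.2).lt_of_ne hcon.2⟩



variable {E : Type*} [MeasurableSpace E]

/-- Rational CDF of a family of measures on `ℝ`. -/
noncomputable def fR (η : E → Measure ℝ) (x : E) (q : ℚ) : ℝ := (η x (Iic (q:ℝ))).toReal

lemma fR_mono (η : E → Measure ℝ) (x : E) [IsFiniteMeasure (η x)] : Monotone (fR η x) :=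
  fun q r hqr => ENNReal.toReal_mono (measure_ne_top _ _)
    (measure_mono (Iic_subset_Iic.2 (by exact_mod_cast hqr)))

lemma isRatStieltjesPoint_fR (η : E → Measure ℝ) (x : E) [IsProbabilityMeasure (η x)] :
    IsRatStieltjesPoint (fR η) x := by
  constructor
  · exact fR_mono η x
  · -- tendsto_atTop_one
    have h := tendsto_measure_iUnion_atTop (μ := η x) (s := fun q : ℚ => Iic ((q:ℝ)))
      (fun q r hqr => Iic_subset_Iic.2 (by exact_mod_cast hqr))
    have huniv : ⋃ q : ℚ, Iic ((q:ℝ)) = univ := by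
      ext u
      simp only [mem_iUnion, mem_Iic, mem_univ, iff_true]
      obtain ⟨q, hq⟩ := exists_rat_gt u
      exact ⟨q, hq.le⟩
    rw [huniv, measure_univ] at h
    have := (ENNReal.tendsto_toReal one_ne_top).comp h
    exact this
  · -- tendsto_atBot_zero
    have h := tendsto_measure_iInter_atBot (μ := η x) (s := fun q : ℚ => Iic ((q:ℝ)))
      (fun q => measurableSet_Iic.nullMeasurableSet)
      (fun q r hqr => Iic_subset_Iic.2 (by exact_mod_cast hqr))
      ⟨0, measure_ne_top _ _⟩
    have hempty : ⋂ q : ℚ, Iic ((q:ℝ)) = ∅ := by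
      ext u
      simp only [mem_iInter, mem_Iic, mem_empty_iff_false, iff_false, not_forall, not_le]
      obtain ⟨q, hq⟩ := exists_rat_lt u
      exact ⟨q, hq⟩
    rw [hempty, measure_empty] at h
    have := (ENNReal.tendsto_toReal zero_ne_top).comp h
    exact this
  · -- iInf_rat_gt_eq
    intro t
    have hbdd : BddBelow (range fun r : Ioi t => fR η x ↑r) := by
      refine ⟨0, fun y hy => ?_⟩
      obtain ⟨r, rfl⟩ := hy
      exact ENNReal.toReal_nonneg
    refine le_antisymm ?_ ?_
    swap
    · exact le_ciInf fun r => fR_mono η x (le_of_lt r.2)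
    by_contra hcon
    push_neg at hcon
    set c := ⨅ r : Ioi t, fR η x ↑r with hc
    have hlt : fR η x t < c := hcon
    have hT : Tendsto (fun r : ℝ => (η x (Iic r)).toReal) (𝓝[>] (t:ℝ))
        (𝓝 ((η x (Iic ((t:ℚ):ℝ))).toReal)) := by
      have h1 := tendsto_measure_biInter_gt (μ := η x) (s := fun r : ℝ => Iic r) (a := ((t:ℚ):ℝ))
        (fun r _ => measurableSet_Iic.nullMeasurableSet)
        (fun i j _ hij => Iic_subset_Iic.2 hij)
        ⟨(t:ℝ) + 1, by linarith, measure_ne_top _ _⟩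
      have hI : ⋂ r, ⋂ (_ : r > ((t:ℚ):ℝ)), Iic r = Iic ((t:ℚ):ℝ) := by
        ext u
        simp only [mem_iInter, mem_Iic]
        exact ⟨fun h => le_of_forall_gt_imp_ge_of_dense fun a ha => h a ha,
          fun h r hr => h.trans hr.le⟩
      rw [hI] at h1
      exact (ENNReal.tendsto_toReal (measure_ne_top _ _)).comp h1
    have hev : ∀ᶠ r in 𝓝[>] ((t:ℚ):ℝ), (η x (Iic r)).toReal < c :=
      hT.eventually (eventually_lt_nhds hlt)
    obtain ⟨U, hUopen, htU, hUsub⟩ := mem_nhdsWithin.1 hev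
    obtain ⟨δ, hδ, hball⟩ := Metric.isOpen_iff.1 hUopen _ htU
    obtain ⟨q, hq1, hq2⟩ := exists_rat_btwn (lt_add_of_pos_right ((t:ℚ):ℝ) hδ)
    have hqt : t < q := by exact_mod_cast hq1
    have hqP : (η x (Iic ((q:ℚ):ℝ))).toReal < c := by
      refine hUsub ⟨hball ?_, hq1⟩
      rw [Metric.mem_ball, Real.dist_eq, abs_of_pos (by linarith)]
      linarith
    have : c ≤ fR η x q := ciInf_le hbdd ⟨q, hqt⟩
    exact absurd (this.trans_lt hqP) (lt_irrefl c)

end Stmt13Aux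
end Stmt13Aux

open Set Filter Topology in
/-- Kallenberg's randomization lemma: every Markov kernel into a standard
Borel space can be represented by a measurable function of the state and a uniform
random variable on `[0,1]`. -/

theorem stmt_13 {E E' : Type*} [MeasurableSpace E] [MeasurableSpace E']
    [StandardBorelSpace E']
    (κ : Kernel E E') [IsMarkovKernel κ] :
    ∃ f : E × unitInterval → E', Measurable f ∧
      ∀ x : E, (volume : Measure unitInterval).map (fun z => f (x, z)) = κ x := by
  rcases isEmpty_or_nonempty E' with hE' | hE'
  · have hE : IsEmpty E := ⟨fun x => by
      have h1 : (κ x) Set.univ = 1 := measure_univ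
      rw [Set.univ_eq_empty_iff.mpr hE', measure_empty] at h1
      exact zero_ne_one h1⟩
    exact ⟨fun p => isEmptyElim p.1, measurable_of_empty _, fun x => isEmptyElim x⟩
  obtain ⟨g, hg⟩ := exists_measurableEmbedding_real E'
  set η : E → Measure ℝ := fun x => (κ x).map g with hη
  have hηprob : ∀ x, IsProbabilityMeasure (η x) := fun x =>
    Measure.isProbabilityMeasure_map hg.measurable.aemeasurable
  have hfRmeas : Measurable (Stmt13Aux.fR η) := by
    refine measurable_pi_lambda _ fun q => Measurable.ennreal_toReal ?_
    have h2 : (fun x => η x (Set.Iic ((q:ℚ):ℝ))) = fun x => κ x (g ⁻¹' Set.Iic ((q:ℚ):ℝ)) := by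
      funext x; exact Measure.map_apply hg.measurable measurableSet_Iic
    rw [h2]
    exact κ.measurable_coe (hg.measurable measurableSet_Iic)
  set Φ := ProbabilityTheory.stieltjesOfMeasurableRat (Stmt13Aux.fR η) hfRmeas with hΦ
  have hΦrat : ∀ x (q : ℚ), Φ x (q:ℝ) = Stmt13Aux.fR η x q := fun x q => by
    rw [hΦ, ProbabilityTheory.stieltjesOfMeasurableRat_eq,
      ProbabilityTheory.toRatCDF_of_isRatStieltjesPoint
        (haveI := hηprob x; Stmt13Aux.isRatStieltjesPoint_fR η x)]
  have hΦbot : ∀ x, Tendsto (Φ x) atBot (𝓝 0) := fun x =>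
    ProbabilityTheory.tendsto_stieltjesOfMeasurableRat_atBot hfRmeas x
  have hΦtop : ∀ x, Tendsto (Φ x) atTop (𝓝 1) := fun x =>
    ProbabilityTheory.tendsto_stieltjesOfMeasurableRat_atTop hfRmeas x
  set Q : E × unitInterval → ℝ := fun p => sInf {s | Stmt13Aux.vv p.2 ≤ Φ p.1 s} with hQ
  have hQle : ∀ p (t : ℝ), Q p ≤ t ↔ Stmt13Aux.vv p.2 ≤ Φ p.1 t := fun p t =>
    Stmt13Aux.quantile_le_iff (Φ p.1) (hΦbot p.1) (hΦtop p.1)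
      (Stmt13Aux.vv_mem p.2).1 (Stmt13Aux.vv_mem p.2).2 t
  have hQmeas : Measurable Q := by
    refine measurable_of_Iic fun t => ?_
    have h3 : Q ⁻¹' Set.Iic t = {p | Stmt13Aux.vv p.2 ≤ Φ p.1 t} := by
      ext p; exact hQle p t
    rw [h3]
    exact measurableSet_le (Stmt13Aux.measurable_vv.comp measurable_snd)
      ((ProbabilityTheory.measurable_stieltjesOfMeasurableRat hfRmeas t).comp measurable_fst)
  set g' : ℝ → E' := Function.extend g id fun _ => Classical.arbitrary E' with hg'
  have hg'meas : Measurable g' := hg.measurable_extend measurable_id measurable_const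
  refine ⟨fun p => g' (Q p), hg'meas.comp hQmeas, fun x => ?_⟩
  have hQx : Measurable fun z : unitInterval => Q (x, z) :=
    hQmeas.comp measurable_prodMk_left
  have hlaw : (volume : Measure unitInterval).map (fun z => Q (x, z)) = η x := by
    haveI := hηprob x
    haveI : IsProbabilityMeasure ((volume : Measure unitInterval).map (fun z => Q (x, z))) :=
      Measure.isProbabilityMeasure_map hQx.aemeasurable
    refine MeasureTheory.ext_of_generate_finite _ ?_ Real.isPiSystem_Iic_rat ?_ ?_
    · rw [BorelSpace.measurable_eq (α := ℝ)]
      exact Real.borel_eq_generateFrom_Iic_rat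
    · intro s hs
      simp only [Set.mem_iUnion, Set.mem_singleton_iff] at hs
      obtain ⟨q, rfl⟩ := hs
      rw [Measure.map_apply hQx measurableSet_Iic]
      have hset : (fun z : unitInterval => Q (x, z)) ⁻¹' Set.Iic ((q:ℚ):ℝ)
          = {z : unitInterval | Stmt13Aux.vv z ≤ Φ x ((q:ℚ):ℝ)} := by
        ext z; exact hQle (x, z) _
      rw [hset]
      have haeset : ({z : unitInterval | Stmt13Aux.vv z ≤ Φ x ((q:ℚ):ℝ)} : Set unitInterval)
          =ᵐ[volume] {z : unitInterval | (z:ℝ) ≤ Φ x ((q:ℚ):ℝ)} := by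
        rw [Filter.eventuallyEq_set]
        filter_upwards [Stmt13Aux.vv_ae_eq] with z hz
        rw [hz]
      rw [measure_congr haeset,
        Stmt13Aux.volume_coe_le
          (ProbabilityTheory.stieltjesOfMeasurableRat_nonneg hfRmeas x _)
          (ProbabilityTheory.stieltjesOfMeasurableRat_le_one hfRmeas x _),
        hΦrat x q]
      unfold Stmt13Aux.fR
      rw [ENNReal.ofReal_toReal (measure_ne_top _ _)]
    · simp [measure_univ]
  have hcomp : g' ∘ g = id := by
    funext y
    show Function.extend g id (fun _ => Classical.arbitrary E') (g y) = y
    exact hg.injective.extend_apply _ _ y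
  calc (volume : Measure unitInterval).map (fun z => g' (Q (x, z)))
      = ((volume : Measure unitInterval).map (fun z => Q (x, z))).map g' :=
        (Measure.map_map hg'meas hQx).symm
    _ = (η x).map g' := by rw [hlaw]
    _ = ((κ x).map g).map g' := rfl
    _ = (κ x).map (g' ∘ g) := Measure.map_map hg'meas hg.measurable
    _ = (κ x).map id := by rw [hcomp]
    _ = κ x := Measure.map_id
end

section
/- Let S1, S1', S2, S2' be measurable spaces, κ1 a Markov kernel from S1 to S1' and κ2 a Markov kernel from S2 to S2', and g1 : S1' → ℝ≥0∞, g2 : S2' → ℝ≥0∞ measurable with 0 < (κ1 g1)(x1) < ∞ and 0 < (κ2 g2)(x2) < ∞ for all x1 ∈ S1, x2 ∈ S2. Then the h-transform of the product kernel with respect to the product function factorizes: (κ1 ⊗ κ2)^{g1 ⊙ g2} = κ1^{g1} ⊗ κ2^{g2}, where (g1 ⊙ g2)(y1,y2) = g1(y1) g2(y2); that is, for all (x1,x2) and measurable rectangles B1 × B2, (κ1 ⊗ κ2)^{g1 ⊙ g2}((x1,x2), B1 × B2) = κ1^{g1}(x1, B1) · κ2^{g2}(x2, B2). -/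
open MeasureTheory ProbabilityTheory ENNReal

/-- the h-transform of a product kernel w.r.t. a product function
factorizes on measurable rectangles. -/
theorem stmt_15 {S1 S1' S2 S2' : Type*}
    [MeasurableSpace S1] [MeasurableSpace S1'] [MeasurableSpace S2] [MeasurableSpace S2']
    (κ1 : Kernel S1 S1') (κ2 : Kernel S2 S2')
    [IsMarkovKernel κ1] [IsMarkovKernel κ2]
    (g1 : S1' → ℝ≥0∞) (hg1 : Measurable g1) (g2 : S2' → ℝ≥0∞) (hg2 : Measurable g2)
    (h1 : ∀ x1 : S1, 0 < pull κ1 g1 x1 ∧ pull κ1 g1 x1 < ∞)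
    (h2 : ∀ x2 : S2, 0 < pull κ2 g2 x2 ∧ pull κ2 g2 x2 < ∞) :
    ∀ (x1 : S1) (x2 : S2) (B1 : Set S1') (B2 : Set S2'),
      MeasurableSet B1 → MeasurableSet B2 →
      hTransform (pker κ1 κ2) (fun y => g1 y.1 * g2 y.2) (x1, x2) (B1 ×ˢ B2) =
        hTransform κ1 g1 x1 B1 * hTransform κ2 g2 x2 B2 := by
  intro x1 x2 B1 B2 hB1 hB2
  obtain ⟨h1p, h1f⟩ := h1 x1
  obtain ⟨h2p, h2f⟩ := h2 x2
  have hκ : pker κ1 κ2 (x1, x2) = (κ1 x1).prod (κ2 x2) := by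
    rw [pker, Kernel.prod_apply, Kernel.prodMkRight_apply, Kernel.prodMkLeft_apply]
  have hpull : pull (pker κ1 κ2) (fun y => g1 y.1 * g2 y.2) (x1, x2)
      = pull κ1 g1 x1 * pull κ2 g2 x2 := by
    simp only [pull, hκ]
    exact lintegral_prod_mul hg1.aemeasurable hg2.aemeasurable
  simp only [hTransform, Measure.smul_apply, smul_eq_mul,
    withDensity_apply _ hB1, withDensity_apply _ hB2,
    withDensity_apply _ (hB1.prod hB2), hκ, hpull]
  rw [← Measure.prod_restrict, lintegral_prod_mul hg1.aemeasurable hg2.aemeasurable,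
    ENNReal.mul_inv (Or.inl h1p.ne') (Or.inl h1f.ne)]
  ring
end
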